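/- arXiv:0902.4161 — 3 statements merged into one kernel-verified Lean document; each statement's English description precedes it below -/
import Mathlib

section
/- Let p be a prime, A an abelian group, and σ : A → A an additive endomorphism with (σ - id)² = 0. Suppose x ∈ A is a torsion element whose order is coprime to p, and suppose σ^(p^k)(x) = x for some k ≥ 0. Then σ(x) = x. -/
/-!
Since `(σ - 1)² = 0`, the element `y = σ x - x` is fixed by `σ`, so `σ^[m] x = x + m • y` for
all `m`. Hence `y` is killed both by `p ^ k` (from `σ^[p ^ k] x = x`) and by the order of `x`;
these are coprime, so `y = 0`.
-/

section Unipotent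

variable {A : Type*} [AddCommGroup A] (σ : A →+ A) {x : A}

theorem map_sub_self_eq_of_sq_sub_id (h : σ (σ x) - 2 • σ x + x = 0) :
    σ (σ x - x) = σ x - x := by
  have hσσ : σ (σ x) = 2 • σ x - x := by
    rw [← sub_eq_zero, ← h]
    abel
  rw [map_sub, hσσ, two_nsmul]
  abel

theorem iterate_eq_add_nsmul_sub_self (h : σ (σ x - x) = σ x - x) (m : ℕ) :
    (⇑σ)^[m] x = x + m • (σ x - x) := by
  induction m with
  | zero => simp
  | succ m ih =>
    rw [Function.iterate_succ_apply', ih, map_add, map_nsmul, h, succ_nsmul]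
    abel

theorem nsmul_sub_self_eq_zero {n : ℕ} (hn : n • x = 0) : n • (σ x - x) = 0 := by
  rw [smul_sub, ← map_nsmul, hn, map_zero, sub_zero]

end Unipotent

theorem stmt_1_general (p : ℕ) (A : Type*) [AddCommGroup A]
    (σ : A →+ A) (hσ : ∀ x : A, σ (σ x) - 2 • σ x + x = 0)
    (x : A) (hcop : Nat.Coprime (addOrderOf x) p)
    (k : ℕ) (hfix : (⇑σ)^[p ^ k] x = x) :
    σ x = x := by
  have hfixed := map_sub_self_eq_of_sq_sub_id σ (hσ x)
  have hpk : p ^ k • (σ x - x) = 0 := by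
    simpa [hfix] using iterate_eq_add_nsmul_sub_self σ hfixed (p ^ k)
  have horder : addOrderOf x • (σ x - x) = 0 :=
    nsmul_sub_self_eq_zero σ (addOrderOf_nsmul_eq_zero x)
  exact sub_eq_zero.mp ((nsmul_eq_zero_iff_of_coprime (hcop.pow_right k)).mp ⟨horder, hpk⟩)

theorem stmt_1 (p : ℕ) (hp : p.Prime) (A : Type*) [AddCommGroup A]
    (σ : A →+ A) (hσ : ∀ x : A, σ (σ x) - 2 • σ x + x = 0)
    (x : A) (hx : IsOfFinAddOrder x) (hcop : Nat.Coprime (addOrderOf x) p)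
    (k : ℕ) (hfix : (⇑σ)^[p ^ k] x = x) :
    σ x = x :=
  stmt_1_general p A σ hσ x hcop k hfix
end

section
/- Let p be a prime, r ≥ 1, s ≥ 1, and let M be an s × s matrix with coefficients in ℤ/p^r ℤ. If p is odd, then (Id + p·M)^(p^(r-1)) = Id in the matrix ring over ℤ/p^r ℤ. -/
/-!
If `y ≡ 1` modulo `p ^ k` with `k ≥ 1`, then `y ^ p ≡ 1` modulo `p ^ (k + 1)`: in the binomial
expansion of `(1 + p ^ k x) ^ p` the linear term is `p · p ^ k x` and every higher term already
carries `p ^ (2k)`. Iterating `r - 1` times from `1 + p M` gives `(1 + p M) ^ (p ^ (r - 1)) ≡ 1`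
modulo `p ^ r`.
-/

theorem Nat.pow_succ_dvd_pow_mul_choose (p k i : ℕ) (hk : k ≠ 0) :
    p ^ (k + 1) ∣ p ^ (k * (i + 1)) * p.choose (i + 1) := by
  rcases i with _ | i
  · simp [pow_succ]
  · exact dvd_mul_of_dvd_left (pow_dvd_pow p (by nlinarith [Nat.one_le_iff_ne_zero.2 hk])) _

theorem pow_succ_dvd_one_add_pow_mul_pow_sub_one {R : Type*} [Ring R] (p k : ℕ) (hk : k ≠ 0)
    (x : R) : (p : R) ^ (k + 1) ∣ (1 + (p : R) ^ k * x) ^ p - 1 := by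
  rw [add_comm (1 : R), (Commute.one_right _).add_pow, Finset.sum_range_succ']
  simp only [one_pow, mul_one, pow_zero, Nat.choose_zero_right, Nat.cast_one]
  rw [add_sub_cancel_right]
  refine Finset.dvd_sum fun i _ => ?_
  have hterm : ((p : R) ^ k * x) ^ (i + 1) * (p.choose (i + 1) : R)
      = ((p ^ (k * (i + 1)) * p.choose (i + 1) : ℕ) : R) * x ^ (i + 1) := by
    rw [((Nat.cast_commute p x).pow_left k).mul_pow, ← pow_mul, mul_assoc, ← Nat.cast_comm,
      Nat.cast_mul, Nat.cast_pow, mul_assoc]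
  rw [hterm, ← Nat.cast_pow]
  exact dvd_mul_of_dvd_left (Nat.cast_dvd_cast (Nat.pow_succ_dvd_pow_mul_choose p k i hk)) _

theorem pow_succ_dvd_one_add_mul_pow_pow_sub_one {R : Type*} [Ring R] (p n : ℕ) (x : R) :
    (p : R) ^ (n + 1) ∣ (1 + p * x) ^ p ^ n - 1 := by
  induction n with
  | zero => simp
  | succ n ih =>
    obtain ⟨y, hy⟩ := ih
    rw [pow_succ p n, pow_mul, sub_eq_iff_eq_add'.1 hy]
    exact pow_succ_dvd_one_add_pow_mul_pow_sub_one p (n + 1) n.succ_ne_zero y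

theorem stmt_3_general (p : ℕ) (r s : ℕ)
    (M : Matrix (Fin s) (Fin s) (ZMod (p ^ r))) :
    (1 + (p : ZMod (p ^ r)) • M) ^ (p ^ (r - 1)) = 1 := by
  rcases r with _ | n
  · have : Subsingleton (ZMod (p ^ 0)) := pow_zero p ▸ inferInstance
    exact Subsingleton.elim _ _
  have hchar : ((p : Matrix (Fin s) (Fin s) (ZMod (p ^ (n + 1))))) ^ (n + 1) = 0 := by
    rw [← Nat.cast_pow, ← Matrix.diagonal_natCast, ZMod.natCast_self, Matrix.diagonal_zero]
  rw [Nat.cast_smul_eq_nsmul, nsmul_eq_mul, Nat.add_sub_cancel, ← sub_eq_zero, ← zero_dvd_iff,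
    ← hchar]
  exact pow_succ_dvd_one_add_mul_pow_pow_sub_one p n M

theorem stmt_3 (p : ℕ) (hp : p.Prime) (hodd : p ≠ 2) (r s : ℕ) (hr : 1 ≤ r) (hs : 1 ≤ s)
    (M : Matrix (Fin s) (Fin s) (ZMod (p ^ r))) :
    (1 + (p : ZMod (p ^ r)) • M) ^ (p ^ (r - 1)) = 1 :=
  stmt_3_general p r s M
end

section
/- Let A be an abelian group, C ⊆ A a subset, and ι : C → C an involution. Suppose that whenever a₁, a₂, b₁, b₂ ∈ C satisfy b₁ + a₂ = a₁ + b₂ in A, then either ({b₁, a₂} = {a₁, b₂} as unordered pairs with b₁ = b₂, a₁ = a₂ or b₁ = a₁, b₂ = a₂) or (a₂ = ι(b₁) and b₂ = ι(a₁)). Then for every x ∈ A with x ≠ 0, the set {c ∈ C : c + x ∈ C} has at most two elements. -/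
theorem Set.encard_le_two_of_forall_ne {α : Type*} (s : Set α) (g : α → α)
    (h : ∀ c ∈ s, ∀ d ∈ s, c ≠ d → d = g c) : s.encard ≤ 2 := by
  rcases s.eq_empty_or_nonempty with rfl | ⟨c, hc⟩
  · simp
  have hsub : s ⊆ {c, g c} := fun d hd => by
    by_cases hcd : c = d
    · exact Or.inl hcd.symm
    · exact Or.inr (h c hc d hd hcd)
  calc s.encard ≤ ({c, g c} : Set α).encard := Set.encard_le_encard hsub
    _ ≤ ({g c} : Set α).encard + 1 := Set.encard_insert_le _ _
    _ = 2 := by rw [Set.encard_singleton]; rfl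

/-- Of the three alternatives that rigidity allows for `(c + x) + d = c + (d + x)`,
the two trivial ones force `c = d` or `x = 0`. -/
theorem eq_apply_add_of_rigid {A : Type*} [AddCommGroup A] {C : Set A} {ι : A → A}
    (hrigid : ∀ a₁ ∈ C, ∀ a₂ ∈ C, ∀ b₁ ∈ C, ∀ b₂ ∈ C,
      b₁ + a₂ = a₁ + b₂ →
        ((b₁ = b₂ ∧ a₁ = a₂) ∨ (b₁ = a₁ ∧ b₂ = a₂)) ∨ (a₂ = ι b₁ ∧ b₂ = ι a₁))
    {x : A} (hx : x ≠ 0) {c d : A} (hc : c ∈ {c ∈ C | c + x ∈ C})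
    (hd : d ∈ {c ∈ C | c + x ∈ C}) (hcd : c ≠ d) : d = ι (c + x) := by
  have hrel : (c + x) + d = c + (d + x) := by abel
  rcases hrigid c hc.1 d hd.1 (c + x) hc.2 (d + x) hd.2 hrel with
    (⟨-, hcd'⟩ | ⟨hcx, -⟩) | ⟨hd_eq, -⟩
  · exact absurd hcd' hcd
  · exact absurd (add_eq_left.mp hcx) hx
  · exact hd_eq

theorem stmt_9_general (A : Type*) [AddCommGroup A] (C : Set A)
    (ι : A → A)
    (hrigid : ∀ a₁ ∈ C, ∀ a₂ ∈ C, ∀ b₁ ∈ C, ∀ b₂ ∈ C,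
      b₁ + a₂ = a₁ + b₂ →
        ((b₁ = b₂ ∧ a₁ = a₂) ∨ (b₁ = a₁ ∧ b₂ = a₂)) ∨ (a₂ = ι b₁ ∧ b₂ = ι a₁)) :
    ∀ x : A, x ≠ 0 → {c ∈ C | c + x ∈ C}.encard ≤ 2 := fun _ hx =>
  Set.encard_le_two_of_forall_ne _ _ fun _ hc _ hd hcd =>
    eq_apply_add_of_rigid hrigid hx hc hd hcd

theorem stmt_9 (A : Type*) [AddCommGroup A] (C : Set A)
    (ι : A → A) (hιC : ∀ c ∈ C, ι c ∈ C) (hinv : ∀ c ∈ C, ι (ι c) = c)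
    (hrigid : ∀ a₁ ∈ C, ∀ a₂ ∈ C, ∀ b₁ ∈ C, ∀ b₂ ∈ C,
      b₁ + a₂ = a₁ + b₂ →
        ((b₁ = b₂ ∧ a₁ = a₂) ∨ (b₁ = a₁ ∧ b₂ = a₂)) ∨ (a₂ = ι b₁ ∧ b₂ = ι a₁)) :
    ∀ x : A, x ≠ 0 → {c ∈ C | c + x ∈ C}.encard ≤ 2 :=
  stmt_9_general A C ι hrigid
end
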